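/- Let G be a connected graph with root R_G such that the maximal distance d_{R_G} from R_G to the vertices of G is at least 3, and let H be any graph with root R_H. Then the distance residual of the lexicographic product satisfies Res(G ∘ H, R_G × R_H) ≅ Res(G, R_G) ∘ H. -/

import Mathlib

open SimpleGraph

/-- Distance from a set of vertices `S` to a vertex `v`: `min_{s ∈ S} d(s, v)`. -/
noncomputable def setDist {V : Type*} (G : SimpleGraph V) (S : Set V) (v : V) : ℕ :=
  sInf ((fun s => G.dist s v) '' S)

/-- The set of vertices at maximal distance from `S`. -/
def resSet {V : Type*} (G : SimpleGraph V) (S : Set V) : Set V :=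
  {v | ∀ w, setDist G S w ≤ setDist G S v}

/-- The distance-residual graph: subgraph induced on vertices at maximal distance from `S`. -/
def Res {V : Type*} (G : SimpleGraph V) (S : Set V) : SimpleGraph (resSet G S) :=
  SimpleGraph.induce (resSet G S) G

/-- The lexicographic product of two simple graphs. -/
def lexProd {α β : Type*} (G : SimpleGraph α) (H : SimpleGraph β) :
    SimpleGraph (α × β) where
  Adj x y := G.Adj x.1 y.1 ∨ (x.1 = y.1 ∧ H.Adj x.2 y.2)
  symm := by
    refine ⟨?_⟩
    rintro x y (h | ⟨h1, h2⟩)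
    · exact Or.inl h.symm
    · exact Or.inr ⟨h1.symm, h2.symm⟩
  loopless := by refine ⟨?_⟩; rintro x (h | ⟨-, h⟩) <;> exact h.ne rfl

/-!
Away from the root set, distances in `G ∘ H` are read off the first coordinate, so a vertex
`(u, x)` with `u ∉ R_G` has the same distance to `R_G × R_H` as `u` has to `R_G`. A vertex `(u, x)`
with `u ∈ R_G` reaches `R_G × R_H` within two steps, through any neighbour of `u`. Since the
eccentricity of `R_G` is at least `3`, the farthest vertices of `G ∘ H` are exactly the pairs
`(u, x)` with `u` farthest in `G`, and the residual of `G ∘ H` is the lexicographic product of the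
residual of `G` with the whole of `H`.
-/

theorem Nat.isGreatest_sSup_of_ne_zero {s : Set ℕ} (h : sSup s ≠ 0) : IsGreatest s (sSup s) := by
  have hbdd : BddAbove s := by
    by_contra hbdd
    exact h (Nat.sSup_of_not_bddAbove hbdd)
  have hne : s.Nonempty := by
    rw [Set.nonempty_iff_ne_empty]
    rintro rfl
    exact h csSup_empty
  exact ⟨Nat.sSup_mem hne hbdd, fun _ ha => le_csSup hbdd ha⟩

section LexProd

variable {α β : Type*} {G : SimpleGraph α} {H : SimpleGraph β}

theorem lexProd_adj {p q : α × β} :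
    (lexProd G H).Adj p q ↔ G.Adj p.1 q.1 ∨ (p.1 = q.1 ∧ H.Adj p.2 q.2) :=
  Iff.rfl

variable (G H) in
def lexProdLeft (x : β) : G →g lexProd G H :=
  ⟨fun v => (v, x), Or.inl⟩

theorem dist_fst_le_length_of_lexProd (hG : G.Connected) {p q : α × β}
    (w : (lexProd G H).Walk p q) : G.dist p.1 q.1 ≤ w.length := by
  induction w with
  | nil => simp
  | @cons p r q hadj w ih =>
    rw [Walk.length_cons]
    rcases hadj with hadj | ⟨hfst, -⟩
    · calc G.dist p.1 q.1 ≤ G.dist p.1 r.1 + G.dist r.1 q.1 := hG.dist_triangle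
        _ ≤ w.length + 1 := by rw [dist_eq_one_iff_adj.mpr hadj]; omega
    · rw [hfst]; omega

theorem lexProd_dist_of_ne (hG : G.Connected) {s u : α} (hsu : s ≠ u) (t x : β) :
    (lexProd G H).dist (s, t) (u, x) = G.dist s u := by
  obtain ⟨w, hw⟩ := hG.exists_walk_length_eq_dist s u
  cases w with
  | nil => exact absurd rfl hsu
  | @cons _ r _ hadj w =>
    -- leave the fibre of `t` along the first edge, then follow `w` inside the fibre of `x`
    let w' : (lexProd G H).Walk (s, t) (u, x) :=
      .cons (show (lexProd G H).Adj (s, t) (r, x) from Or.inl hadj) (w.map (lexProdLeft G H x))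
    have hw' : w'.length = G.dist s u := by
      change (w.map _).length + 1 = _
      rwa [Walk.length_map]
    refine le_antisymm (hw' ▸ dist_le w') ?_
    obtain ⟨w'', hw''⟩ := w'.reachable.exists_walk_length_eq_dist
    exact hw'' ▸ dist_fst_le_length_of_lexProd hG w''

theorem lexProd_dist_le_two {u v : α} (huv : G.Adj u v) (t x : β) :
    (lexProd G H).dist (u, t) (u, x) ≤ 2 :=
  dist_le (.cons (show (lexProd G H).Adj (u, t) (v, t) from Or.inl huv)
    (Adj.toWalk (show (lexProd G H).Adj (v, t) (u, x) from Or.inl huv.symm)))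

def lexProdInduceIso {A : Set α} {B : Set (α × β)} (hB : ∀ p, p ∈ B ↔ p.1 ∈ A) :
    (lexProd G H).induce B ≃g lexProd (G.induce A) H where
  toFun p := (⟨p.1.1, (hB p.1).mp p.2⟩, p.1.2)
  invFun p := ⟨(p.1.1, p.2), (hB _).mpr p.1.2⟩
  left_inv _ := rfl
  right_inv _ := rfl
  map_rel_iff' {p q} := by
    simp only [Equiv.coe_fn_mk, comap_adj, Function.Embedding.subtype_apply, lexProd_adj,
      Subtype.ext_iff]

end LexProd

section SetDist

variable {V : Type*} {G : SimpleGraph V} {S : Set V}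

theorem setDist_le_dist {s : V} (hs : s ∈ S) (v : V) : setDist G S v ≤ G.dist s v :=
  Nat.sInf_le ⟨s, hs, rfl⟩

theorem setDist_eq_zero_of_mem {v : V} (hv : v ∈ S) : setDist G S v = 0 :=
  Nat.eq_zero_of_le_zero (dist_self (G := G) ▸ setDist_le_dist hv v)

theorem mem_resSet_iff_setDist_eq {M : ℕ} (hM : IsGreatest (Set.range (setDist G S)) M) {v : V} :
    v ∈ resSet G S ↔ setDist G S v = M := by
  constructor
  · intro hv
    obtain ⟨w, hw⟩ := hM.1
    exact le_antisymm (hM.2 ⟨v, rfl⟩) (hw ▸ hv w)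
  · rintro hv w
    exact hv ▸ hM.2 ⟨w, rfl⟩

end SetDist

section Residual

variable {α β : Type*} {G : SimpleGraph α} {H : SimpleGraph β} {RG : Set α} {RH : Set β}

theorem setDist_lexProd_of_notMem (hG : G.Connected) (hRH : RH.Nonempty) {u : α} (hu : u ∉ RG)
    (x : β) : setDist (lexProd G H) (RG ×ˢ RH) (u, x) = setDist G RG u := by
  have hne : ∀ s ∈ RG, s ≠ u := fun s hs h => hu (h ▸ hs)
  unfold setDist
  congr 1
  ext n
  constructor
  · rintro ⟨⟨s, t⟩, ⟨hs, -⟩, rfl⟩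
    exact ⟨s, hs, (lexProd_dist_of_ne hG (hne s hs) t x).symm⟩
  · rintro ⟨s, hs, rfl⟩
    obtain ⟨t, ht⟩ := hRH
    exact ⟨(s, t), ⟨hs, ht⟩, lexProd_dist_of_ne hG (hne s hs) t x⟩

theorem setDist_lexProd_le_two {u v : α} (hu : u ∈ RG) (huv : G.Adj u v) {t : β} (ht : t ∈ RH)
    (x : β) : setDist (lexProd G H) (RG ×ˢ RH) (u, x) ≤ 2 :=
  (setDist_le_dist (Set.mk_mem_prod hu ht) _).trans (lexProd_dist_le_two huv t x)

theorem mem_resSet_lexProd_iff (hG : G.Connected) (hRH : RH.Nonempty)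
    (hd : 3 ≤ sSup (Set.range (setDist G RG))) (p : α × β) :
    p ∈ resSet (lexProd G H) (RG ×ˢ RH) ↔ p.1 ∈ resSet G RG := by
  set M := sSup (Set.range (setDist G RG))
  have hM : IsGreatest (Set.range (setDist G RG)) M := Nat.isGreatest_sSup_of_ne_zero (by omega)
  obtain ⟨v, hv⟩ := hM.1
  have hvRG : v ∉ RG := fun h => by rw [setDist_eq_zero_of_mem h] at hv; omega
  obtain ⟨t, ht⟩ := hRH
  -- every root has a neighbour, since the far vertex `v` is distinct from it
  have hdist_root : ∀ u ∈ RG, ∀ x, setDist (lexProd G H) (RG ×ˢ RH) (u, x) ≤ 2 := by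
    intro u hu x
    have : Nontrivial α := nontrivial_of_ne u v fun h => hvRG (h ▸ hu)
    obtain ⟨w, huw⟩ := hG.preconnected.exists_adj_of_nontrivial u
    exact setDist_lexProd_le_two hu huw ht x
  have hM' : IsGreatest (Set.range (setDist (lexProd G H) (RG ×ˢ RH))) M := by
    refine ⟨⟨(v, t), hv ▸ setDist_lexProd_of_notMem hG ⟨t, ht⟩ hvRG t⟩, ?_⟩
    rintro _ ⟨⟨u, x⟩, rfl⟩
    by_cases hu : u ∈ RG
    · exact (hdist_root u hu x).trans (by omega)
    · exact setDist_lexProd_of_notMem hG ⟨t, ht⟩ hu x ▸ hM.2 ⟨u, rfl⟩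
  obtain ⟨u, x⟩ := p
  rw [mem_resSet_iff_setDist_eq hM', mem_resSet_iff_setDist_eq hM]
  by_cases hu : u ∈ RG
  · have := hdist_root u hu x
    rw [setDist_eq_zero_of_mem hu]
    omega
  · rw [setDist_lexProd_of_notMem hG ⟨t, ht⟩ hu x]

end Residual

theorem statement_17_general {α β : Type*}
    (G : SimpleGraph α) (H : SimpleGraph β) (hG : G.Connected)
    (RG : Set α) (RH : Set β) (hRH : RH.Nonempty)
    (hd : 3 ≤ sSup (Set.range (setDist G RG))) :
    Nonempty (Res (lexProd G H) (RG ×ˢ RH) ≃g lexProd (Res G RG) H) :=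
  ⟨lexProdInduceIso (mem_resSet_lexProd_iff hG hRH hd)⟩

theorem statement_17 {α β : Type*} [Fintype α] [Fintype β]
    (G : SimpleGraph α) (H : SimpleGraph β) (hG : G.Connected)
    (RG : Set α) (RH : Set β) (hRG : RG.Nonempty) (hRH : RH.Nonempty)
    (hd : 3 ≤ sSup (Set.range (setDist G RG))) :
    Nonempty (Res (lexProd G H) (RG ×ˢ RH) ≃g lexProd (Res G RG) H) :=
  statement_17_general G H hG RG RH hRH hd
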